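/- arXiv:2006.13875 — 2 statements merged into one kernel-verified Lean document; each statement's English description precedes it below -/
import Mathlib

section
/- For every fixed r ∈ (−1,1), the BC bridge function Δ ↦ F(r,Δ) is differentiable on ℝ with derivative ∂F/∂Δ (r,Δ) = 2·φ(Δ)·(2·Φ(−rΔ/√(2−r²)) − 1). -/
open Real MeasureTheory

/-- Standard normal density. -/
noncomputable def stdPdf (x : ℝ) : ℝ :=
  (Real.sqrt (2 * Real.pi))⁻¹ * Real.exp (-x ^ 2 / 2)

/-- Standard normal cdf. -/
noncomputable def stdCdf (x : ℝ) : ℝ :=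
  ∫ t in Set.Iic x, stdPdf t

/-- Bivariate standard normal density with correlation `ρ`. -/
noncomputable def pdf2 (x₁ x₂ ρ : ℝ) : ℝ :=
  (2 * Real.pi * Real.sqrt (1 - ρ ^ 2))⁻¹ *
    Real.exp (-(x₁ ^ 2 - 2 * ρ * x₁ * x₂ + x₂ ^ 2) / (2 * (1 - ρ ^ 2)))

/-- Bivariate standard normal cdf. -/
noncomputable def cdf2 (a b ρ : ℝ) : ℝ :=
  ∫ x₁ in Set.Iic a, ∫ x₂ in Set.Iic b, pdf2 x₁ x₂ ρ

/-- The BC-case bridge function `F(r,Δ) = 4Φ₂(Δ,0;r/√2) − 2Φ(Δ)`. -/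
noncomputable def FBC (r Δ : ℝ) : ℝ :=
  4 * cdf2 Δ 0 (r / Real.sqrt 2) - 2 * stdCdf Δ

lemma stdPdf_cont : Continuous stdPdf := by
  unfold stdPdf
  fun_prop

lemma stdPdf_nonneg (x : ℝ) : 0 ≤ stdPdf x := by
  unfold stdPdf
  positivity

lemma stdPdf_integrable : Integrable stdPdf := by
  unfold stdPdf
  have h : Integrable (fun x : ℝ => Real.exp (-(1/2) * x ^ 2)) :=
    integrable_exp_neg_mul_sq (by norm_num)
  have := h.const_mul (Real.sqrt (2 * Real.pi))⁻¹
  convert this using 2 with x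
  ring_nf

/-- FTC for integrals over `Iic`. -/
lemma hasDerivAt_integral_Iic {f : ℝ → ℝ} (hc : Continuous f) (hi : Integrable f) (b : ℝ) :
    HasDerivAt (fun a => ∫ x in Set.Iic a, f x) (f b) b := by
  have key : ∀ a : ℝ, ∫ x in Set.Iic a, f x =
      (∫ x in Set.Iic (0:ℝ), f x) + ∫ x in (0:ℝ)..a, f x := by
    intro a
    rw [← intervalIntegral.integral_Iic_sub_Iic (hi.integrableOn) (hi.integrableOn)]
    ring
  have hfun : (fun a : ℝ => ∫ x in Set.Iic a, f x) =
      fun a => (∫ x in Set.Iic (0:ℝ), f x) + ∫ x in (0:ℝ)..a, f x := funext key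
  rw [hfun]
  exact (intervalIntegral.integral_hasDerivAt_right hi.intervalIntegrable
    (hc.stronglyMeasurableAtFilter _ _) hc.continuousAt).const_add _

lemma stdCdf_hasDerivAt (x : ℝ) : HasDerivAt stdCdf (stdPdf x) x :=
  hasDerivAt_integral_Iic stdPdf_cont stdPdf_integrable x

lemma stdCdf_cont : Continuous stdCdf := by
  have : ∀ x, HasDerivAt stdCdf (stdPdf x) x := stdCdf_hasDerivAt
  exact continuous_iff_continuousAt.2 fun x => (this x).continuousAt

lemma stdCdf_nonneg (x : ℝ) : 0 ≤ stdCdf x :=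
  setIntegral_nonneg measurableSet_Iic fun t _ => stdPdf_nonneg t

lemma stdCdf_le_one (x : ℝ) : stdCdf x ≤ 1 := by
  have h1 : ∫ t : ℝ, stdPdf t = 1 := by
    unfold stdPdf
    rw [MeasureTheory.integral_const_mul]
    have : ∀ t : ℝ, Real.exp (-t ^ 2 / 2) = Real.exp (-(1/2) * t ^ 2) := by
      intro t; ring_nf
    simp_rw [this]
    rw [integral_gaussian]
    rw [inv_mul_eq_one₀ (by positivity)]
    rw [show Real.pi / (1/2) = 2 * Real.pi by ring]
  calc stdCdf x ≤ ∫ t : ℝ, stdPdf t :=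
        setIntegral_le_integral stdPdf_integrable (Filter.Eventually.of_forall stdPdf_nonneg)
    _ = 1 := h1

/-- Affine change of variables in an `Iic` integral. -/
lemma integral_affine_Iic (g : ℝ → ℝ) (c m : ℝ) {σ : ℝ} (hσ : 0 < σ) :
    ∫ x in Set.Iic c, g ((x - m) / σ) = σ * ∫ x in Set.Iic ((c - m) / σ), g x := by
  have hind : ∀ x : ℝ, (Set.Iic ((c - m) / σ)).indicator g ((x - m) / σ) =
      (Set.Iic c).indicator (fun x => g ((x - m) / σ)) x := by
    intro x
    have hiff : (x - m) / σ ≤ (c - m) / σ ↔ x ≤ c := by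
      rw [div_le_div_iff_of_pos_right hσ]; constructor <;> intro h <;> linarith
    simp [Set.indicator, Set.mem_Iic, hiff]
  calc ∫ x in Set.Iic c, g ((x - m) / σ)
      = ∫ x : ℝ, (Set.Iic c).indicator (fun x => g ((x - m) / σ)) x := by
        rw [integral_indicator measurableSet_Iic]
    _ = ∫ x : ℝ, (Set.Iic ((c - m) / σ)).indicator g ((x - m) / σ) := by
        simp_rw [hind]
    _ = ∫ x : ℝ, (Set.Iic ((c - m) / σ)).indicator g (x / σ) := by
        exact integral_sub_right_eq_self (fun x => (Set.Iic ((c - m) / σ)).indicator g (x / σ)) m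
    _ = |σ| • ∫ x : ℝ, (Set.Iic ((c - m) / σ)).indicator g x :=
        MeasureTheory.Measure.integral_comp_div _ σ
    _ = σ * ∫ x in Set.Iic ((c - m) / σ), g x := by
        rw [integral_indicator measurableSet_Iic, abs_of_pos hσ, smul_eq_mul]

lemma pdf2_factor {ρ : ℝ} (hρ : ρ ^ 2 < 1) (x₁ x₂ : ℝ) :
    pdf2 x₁ x₂ ρ =
      stdPdf x₁ * ((Real.sqrt (1 - ρ ^ 2))⁻¹ *
        stdPdf ((x₂ - ρ * x₁) / Real.sqrt (1 - ρ ^ 2))) := by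
  have h1 : (0:ℝ) < 1 - ρ ^ 2 := by linarith
  have hs : Real.sqrt (1 - ρ ^ 2) ^ 2 = 1 - ρ ^ 2 := Real.sq_sqrt h1.le
  have hs0 : (0:ℝ) < Real.sqrt (1 - ρ ^ 2) := Real.sqrt_pos.2 h1
  have hπ : Real.sqrt (2 * Real.pi) ^ 2 = 2 * Real.pi :=
    Real.sq_sqrt (by positivity)
  have hπ0 : (0:ℝ) < Real.sqrt (2 * Real.pi) := Real.sqrt_pos.2 (by positivity)
  unfold pdf2 stdPdf
  have hexp : -x₁ ^ 2 / 2 + -((x₂ - ρ * x₁) / Real.sqrt (1 - ρ ^ 2)) ^ 2 / 2 =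
      -(x₁ ^ 2 - 2 * ρ * x₁ * x₂ + x₂ ^ 2) / (2 * (1 - ρ ^ 2)) := by
    rw [div_pow, hs]
    field_simp
    ring
  have key : Real.exp (-(x₁ ^ 2 - 2 * ρ * x₁ * x₂ + x₂ ^ 2) / (2 * (1 - ρ ^ 2))) =
      Real.exp (-x₁ ^ 2 / 2) * Real.exp (-((x₂ - ρ * x₁) / Real.sqrt (1 - ρ ^ 2)) ^ 2 / 2) := by
    rw [← Real.exp_add, hexp]
  have hconst : (2 * Real.pi * Real.sqrt (1 - ρ ^ 2))⁻¹ =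
      (Real.sqrt (2 * Real.pi))⁻¹ * ((Real.sqrt (1 - ρ ^ 2))⁻¹ * (Real.sqrt (2 * Real.pi))⁻¹) := by
    rw [← mul_inv, ← mul_inv]
    congr 1
    nlinarith [hs, hπ]
  rw [key, hconst]
  ring

lemma inner_integral {ρ : ℝ} (hρ : ρ ^ 2 < 1) (Δ : ℝ) :
    (∫ x₂ in Set.Iic (0:ℝ), pdf2 Δ x₂ ρ) =
      stdPdf Δ * stdCdf (-(ρ * Δ) / Real.sqrt (1 - ρ ^ 2)) := by
  have h1 : (0:ℝ) < 1 - ρ ^ 2 := by linarith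
  have hs0 : (0:ℝ) < Real.sqrt (1 - ρ ^ 2) := Real.sqrt_pos.2 h1
  calc (∫ x₂ in Set.Iic (0:ℝ), pdf2 Δ x₂ ρ)
      = ∫ x₂ in Set.Iic (0:ℝ), stdPdf Δ * ((Real.sqrt (1 - ρ ^ 2))⁻¹ *
          stdPdf ((x₂ - ρ * Δ) / Real.sqrt (1 - ρ ^ 2))) := by
        refine setIntegral_congr_fun measurableSet_Iic fun x _ => ?_
        exact pdf2_factor hρ Δ x
    _ = stdPdf Δ * ((Real.sqrt (1 - ρ ^ 2))⁻¹ *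
          ∫ x₂ in Set.Iic (0:ℝ), stdPdf ((x₂ - ρ * Δ) / Real.sqrt (1 - ρ ^ 2))) := by
        rw [MeasureTheory.integral_const_mul, MeasureTheory.integral_const_mul]
    _ = stdPdf Δ * stdCdf (-(ρ * Δ) / Real.sqrt (1 - ρ ^ 2)) := by
        rw [integral_affine_Iic stdPdf 0 (ρ * Δ) hs0, zero_sub]
        unfold stdCdf
        field_simp

lemma gfun_integrable {ρ : ℝ} (hρ : ρ ^ 2 < 1) :
    Integrable (fun Δ => ∫ x₂ in Set.Iic (0:ℝ), pdf2 Δ x₂ ρ) := by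
  have heq : (fun Δ => ∫ x₂ in Set.Iic (0:ℝ), pdf2 Δ x₂ ρ) =
      fun Δ => stdPdf Δ * stdCdf (-(ρ * Δ) / Real.sqrt (1 - ρ ^ 2)) :=
    funext fun Δ => inner_integral hρ Δ
  rw [heq]
  refine stdPdf_integrable.mono ?_ ?_
  · exact (stdPdf_cont.mul (stdCdf_cont.comp (by fun_prop))).aestronglyMeasurable
  · refine Filter.Eventually.of_forall fun x => ?_
    rw [Real.norm_eq_abs, Real.norm_eq_abs, abs_of_nonneg (stdPdf_nonneg x),
      abs_of_nonneg (mul_nonneg (stdPdf_nonneg x) (stdCdf_nonneg _))]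
    calc stdPdf x * stdCdf _ ≤ stdPdf x * 1 :=
          mul_le_mul_of_nonneg_left (stdCdf_le_one _) (stdPdf_nonneg x)
      _ = stdPdf x := mul_one _

lemma gfun_cont {ρ : ℝ} (hρ : ρ ^ 2 < 1) :
    Continuous (fun Δ => ∫ x₂ in Set.Iic (0:ℝ), pdf2 Δ x₂ ρ) := by
  have heq : (fun Δ => ∫ x₂ in Set.Iic (0:ℝ), pdf2 Δ x₂ ρ) =
      fun Δ => stdPdf Δ * stdCdf (-(ρ * Δ) / Real.sqrt (1 - ρ ^ 2)) :=
    funext fun Δ => inner_integral hρ Δ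
  rw [heq]
  exact stdPdf_cont.mul (stdCdf_cont.comp (by fun_prop))

/-- First derivative of the BC bridge function with respect to `Δ`. -/
theorem FBC_hasDerivAt_delta (r : ℝ) (hr : r ∈ Set.Ioo (-1 : ℝ) 1) :
    ∀ Δ : ℝ,
      HasDerivAt (fun Δ => FBC r Δ)
        (2 * stdPdf Δ * (2 * stdCdf (-r * Δ / Real.sqrt (2 - r ^ 2)) - 1)) Δ := by
  intro Δ
  obtain ⟨hr1, hr2⟩ := hr
  set ρ := r / Real.sqrt 2 with hρdef
  have h2 : (0:ℝ) < Real.sqrt 2 := Real.sqrt_pos.2 (by norm_num)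
  have hr2' : r ^ 2 < 1 := by nlinarith
  have hρsq : ρ ^ 2 = r ^ 2 / 2 := by
    rw [hρdef, div_pow, Real.sq_sqrt (by norm_num : (2:ℝ) ≥ 0)]
  have hρ : ρ ^ 2 < 1 := by rw [hρsq]; linarith
  -- the argument identity
  have hs2 : (0:ℝ) < Real.sqrt (2 - r ^ 2) := Real.sqrt_pos.2 (by nlinarith)
  have harg : -(ρ * Δ) / Real.sqrt (1 - ρ ^ 2) = -r * Δ / Real.sqrt (2 - r ^ 2) := by
    have hσ : Real.sqrt (1 - ρ ^ 2) = Real.sqrt (2 - r ^ 2) / Real.sqrt 2 := by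
      rw [hρsq, show 1 - r ^ 2 / 2 = (2 - r ^ 2) / 2 by ring,
        Real.sqrt_div (by nlinarith) 2]
    rw [hσ, hρdef]
    field_simp
  have hderiv2 : HasDerivAt (fun Δ => cdf2 Δ 0 ρ)
      (stdPdf Δ * stdCdf (-(ρ * Δ) / Real.sqrt (1 - ρ ^ 2))) Δ := by
    have := hasDerivAt_integral_Iic (gfun_cont hρ) (gfun_integrable hρ) Δ
    rw [inner_integral hρ Δ] at this
    exact this
  have hderiv1 : HasDerivAt (fun Δ => stdCdf Δ) (stdPdf Δ) Δ := stdCdf_hasDerivAt Δ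
  have hD := ((hderiv2.const_mul (4:ℝ)).sub (hderiv1.const_mul (2:ℝ)))
  have heq : 2 * stdPdf Δ * (2 * stdCdf (-r * Δ / Real.sqrt (2 - r ^ 2)) - 1) =
      4 * (stdPdf Δ * stdCdf (-(ρ * Δ) / Real.sqrt (1 - ρ ^ 2))) - 2 * stdPdf Δ := by
    rw [harg]; ring
  unfold FBC
  rw [heq]
  exact hD
end

section
/- For every r ∈ (−1,1) and Δ ∈ ℝ, ∫_{−∞}^{−Δ} φ₃(t, 0, 0; Σ₃(r)) dt = (1/(2π√(1−r²))) · Φ(−√2·Δ). -/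
open Real MeasureTheory Matrix

/-- The 3×3 correlation matrix Σ₃(r). -/
noncomputable def Sigma3 (r : ℝ) : Matrix (Fin 3) (Fin 3) ℝ :=
  !![1, 1 / Real.sqrt 2, r / Real.sqrt 2;
     1 / Real.sqrt 2, 1, r;
     r / Real.sqrt 2, r, 1]

/-- Trivariate normal density with covariance Σ₃(r):
`(2π)^{-3/2} (det Σ₃(r))^{-1/2} exp(−½ xᵀ Σ₃(r)⁻¹ x)`. -/
noncomputable def pdf3 (r : ℝ) (x : Fin 3 → ℝ) : ℝ :=
  (Real.sqrt ((2 * Real.pi) ^ 3 * (Sigma3 r).det))⁻¹ *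
    Real.exp (-(1 / 2) * (x ⬝ᵥ (Sigma3 r)⁻¹.mulVec x))

/-- Trivariate normal cdf with covariance Σ₃(r). -/
noncomputable def cdf3 (a b c r : ℝ) : ℝ :=
  ∫ x₁ in Set.Iic a, ∫ x₂ in Set.Iic b, ∫ x₃ in Set.Iic c, pdf3 r ![x₁, x₂, x₃]

/-- The TC-case bridge function `F(r,Δ) = −2Φ₂(−Δ,0;1/√2) + 4Φ₃(−Δ,0,0;Σ₃(r))`. -/
noncomputable def FTC (r Δ : ℝ) : ℝ :=
  -2 * cdf2 (-Δ) 0 (1 / Real.sqrt 2) + 4 * cdf3 (-Δ) 0 0 r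


/-!
Along the first axis the trivariate density is a rescaled univariate one: `(Σ₃(r)⁻¹)₀₀` is the
cofactor `1 - r²` divided by `det Σ₃(r) = (1 - r²)/2`, i.e. `2`, so
`φ₃(t, 0, 0) = √2 / (2π√(1 - r²)) · φ(√2 t)`, and the substitution `u = √2 t` turns the
integral over `(-∞, -Δ]` into `Φ(-√2 Δ) / √2`.
-/

open Set

theorem integral_comp_mul_left_Iic {E : Type*} [NormedAddCommGroup E] [NormedSpace ℝ E]
    (g : ℝ → E) (a : ℝ) {b : ℝ} (hb : 0 < b) :
    ∫ x in Iic a, g (b * x) = b⁻¹ • ∫ x in Iic (b * a), g x := by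
  rw [← integral_indicator measurableSet_Iic, ← integral_indicator measurableSet_Iic,
    ← abs_of_pos (inv_pos.mpr hb), ← Measure.integral_comp_mul_left]
  congr
  ext1 x
  rw [← indicator_comp_right, preimage_const_mul_Iic₀ _ hb, mul_div_cancel_left₀ _ hb.ne',
    Function.comp_def]

theorem Matrix.single_dotProduct_mulVec_single {n R : Type*} [Fintype n] [DecidableEq n]
    [CommRing R] (A : Matrix n n R) (i : n) (x : R) :
    Pi.single i x ⬝ᵥ A *ᵥ Pi.single i x = A i i * x ^ 2 := by
  simp only [single_dotProduct, mulVec_single, Pi.smul_apply, col_apply,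
    MulOpposite.smul_eq_mul_unop, MulOpposite.unop_op]
  ring

theorem det_Sigma3 (r : ℝ) : (Sigma3 r).det = (1 - r ^ 2) / 2 := by
  have h2 : √2 ^ 2 = 2 := sq_sqrt zero_le_two
  simp only [Sigma3, one_div, det_fin_three, Fin.isValue, of_apply, cons_val', cons_val_zero,
    cons_val_fin_one, cons_val_one, mul_one, cons_val, one_mul]
  field_simp
  linear_combination (1 - r ^ 2) * h2

theorem Sigma3_inv_zero_zero {r : ℝ} (hr : r ^ 2 ≠ 1) : (Sigma3 r)⁻¹ 0 0 = 2 := by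
  have hr' : 1 - r ^ 2 ≠ 0 := sub_ne_zero.mpr (Ne.symm hr)
  rw [inv_def, det_Sigma3, Ring.inverse_eq_inv', Matrix.smul_apply, adjugate_fin_three]
  simp only [inv_div, Sigma3, one_div, Fin.isValue, of_apply, cons_val', cons_val_one,
    cons_val_zero, cons_val_fin_one, cons_val, mul_one, one_mul, smul_eq_mul]
  field_simp

theorem pdf3_first_axis {r : ℝ} (hr : r ^ 2 < 1) (t : ℝ) :
    pdf3 r ![t, 0, 0] = √2 / (2 * π * √(1 - r ^ 2)) * stdPdf (√2 * t) := by
  have hr' : 0 < 1 - r ^ 2 := by linarith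
  have hvec : ![t, 0, 0] = Pi.single 0 t := by
    ext i; fin_cases i <;> simp
  have hquad : ![t, 0, 0] ⬝ᵥ (Sigma3 r)⁻¹ *ᵥ ![t, 0, 0] = 2 * t ^ 2 := by
    rw [hvec, single_dotProduct_mulVec_single, Sigma3_inv_zero_zero hr.ne]
  have hnorm : √((2 * π) ^ 3 * ((1 - r ^ 2) / 2)) = 2 * π * √(1 - r ^ 2) * √(2 * π) / √2 := by
    have h2π : √(2 * π) ^ 2 = 2 * π := sq_sqrt (by positivity)
    rw [← sqrt_sq (by positivity : 0 ≤ 2 * π * √(1 - r ^ 2) * √(2 * π) / √2)]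
    congr 1
    simp only [div_pow, mul_pow, sq_sqrt hr'.le, h2π, sq_sqrt zero_le_two]
    ring
  rw [pdf3, hquad, det_Sigma3, stdPdf, hnorm, mul_pow, sq_sqrt zero_le_two]
  field_simp

/-- Marginalization identity:
`∫_{−∞}^{−Δ} φ₃(t,0,0;Σ₃(r)) dt = (1/(2π√(1−r²)))·Φ(−√2·Δ)`. -/
theorem pdf3_partial_integral_first (r : ℝ) (hr : r ∈ Set.Ioo (-1 : ℝ) 1) (Δ : ℝ) :
    ∫ t in Set.Iic (-Δ), pdf3 r ![t, 0, 0] =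
      (1 / (2 * Real.pi * Real.sqrt (1 - r ^ 2))) * stdCdf (-(Real.sqrt 2) * Δ) := by
  have hr2 : r ^ 2 < 1 := by
    rw [sq_lt_one_iff_abs_lt_one, abs_lt]; exact hr
  have hs2 : (0 : ℝ) < √2 := by positivity
  simp_rw [pdf3_first_axis hr2]
  rw [integral_const_mul, integral_comp_mul_left_Iic _ _ hs2, stdCdf, smul_eq_mul, neg_mul,
    ← mul_neg]
  field_simp
end
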